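/- Let A be a finite-dimensional nilpotent complex Zinbiel algebra with nilindex s, and suppose A admits a vector-space direct sum decomposition A = A_1 ⊕ A_2 ⊕ ⋯ ⊕ A_{s−1} such that A_i∘A_j ⊆ A_{i+j} (where A_k = 0 for k ≥ s) and A^k = A_k ⊕ A_{k+1} ⊕ ⋯ ⊕ A_{s−1} for every 1 ≤ k ≤ s−1 (i.e. A is naturally graded). Then the linear span of A_1∘A_j equals A_{j+1} for every j ≥ 1. -/

import Mathlib

/-- A complex Zinbiel algebra structure on the module `A`: a bilinear
multiplication satisfying `(x∘y)∘z = x∘(y∘z) + x∘(z∘y)`. -/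
structure ZinbielStr (A : Type*) [AddCommGroup A] [Module ℂ A] where
  mul : A →ₗ[ℂ] A →ₗ[ℂ] A
  zinbiel : ∀ x y z : A, mul (mul x y) z = mul x (mul y z) + mul x (mul z y)

namespace ZinbielStr

variable {A : Type*} [AddCommGroup A] [Module ℂ A]

/-- `M.lcs k` is the term `A^k` of the lower central series for `k ≥ 1`
(`A^1 = A`, `A^{k+1} = span (A ∘ A^k)`), with the convention `M.lcs 0 = ⊤`. -/
def lcs (M : ZinbielStr A) : ℕ → Submodule ℂ A
  | 0 => ⊤
  | 1 => ⊤
  | k + 2 => Submodule.span ℂ {z | ∃ a b, b ∈ lcs M (k + 1) ∧ z = M.mul a b}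

/-- A Zinbiel algebra is nilpotent when some term of the lower central series vanishes. -/
def IsNilpotent (M : ZinbielStr A) : Prop := ∃ s, 1 ≤ s ∧ M.lcs s = ⊥

/-- `Ag` is a natural grading of `M` with parts `Ag 1, …, Ag t`:
the parts are independent, `A_i ∘ A_j ⊆ A_{i+j}` (with `A_k = 0` for `k > t` and `k = 0`),
and `A^k = A_k ⊕ A_{k+1} ⊕ ⋯ ⊕ A_t` for all `1 ≤ k ≤ t`. -/
structure IsNaturalGrading (M : ZinbielStr A) (t : ℕ) (Ag : ℕ → Submodule ℂ A) : Prop where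
  zero_deg : Ag 0 = ⊥
  high_deg : ∀ k, t < k → Ag k = ⊥
  indep : iSupIndep Ag
  mul_mem : ∀ i j x y, x ∈ Ag i → y ∈ Ag j → M.mul x y ∈ Ag (i + j)
  lcs_eq : ∀ k, 1 ≤ k → k ≤ t → M.lcs k = ⨆ j, ⨆ (_ : k ≤ j), Ag j

/-- An `n`-dimensional Zinbiel algebra is quasi-filiform if `A^{n-2} ≠ 0` and `A^{n-1} = 0`. -/
def IsQuasiFiliform (M : ZinbielStr A) (n : ℕ) : Prop :=
  Module.finrank ℂ A = n ∧ M.lcs (n - 2) ≠ ⊥ ∧ M.lcs (n - 1) = ⊥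

end ZinbielStr

/-!
`A^{j+1} = A ∘ A^j` is spanned by the products `A_i ∘ A_k` with `i ≥ 1` and `k ≥ j`, and all of
them except `A_1 ∘ A_j` lie in degrees `≥ j + 2`. So `A_{j+1} ⊆ A^{j+1}` lies in
`span (A_1 ∘ A_j) + A_{≥ j+2}`; as `span (A_1 ∘ A_j) ⊆ A_{j+1}` and `A_{j+1}` meets `A_{≥ j+2}`
trivially, the modular law gives `A_{j+1} = span (A_1 ∘ A_j)`.
-/

theorem Disjoint.left_le_of_le_sup_right_of_le {α : Type*} [Lattice α] [OrderBot α]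
    [IsModularLattice α] {a b c : α} (h : a ≤ b ⊔ c) (hd : Disjoint a c) (hba : b ≤ a) :
    a ≤ b :=
  (calc a = (b ⊔ c) ⊓ a := (inf_eq_right.2 h).symm
    _ = b ⊔ c ⊓ a := sup_inf_assoc_of_le c hba
    _ = b := by rw [hd.symm.eq_bot, sup_bot_eq]).le

namespace ZinbielStr

variable {A : Type*} [AddCommGroup A] [Module ℂ A]

theorem span_mul_eq_map₂ (M : ZinbielStr A) (p q : Submodule ℂ A) :
    Submodule.span ℂ {z | ∃ x ∈ p, ∃ y ∈ q, z = M.mul x y} = Submodule.map₂ M.mul p q := by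
  rw [Submodule.map₂_eq_span_image2]
  congr
  ext z
  constructor <;> rintro ⟨x, hx, y, hy, h⟩ <;> exact ⟨x, hx, y, hy, h.symm⟩

theorem lcs_add_one (M : ZinbielStr A) {k : ℕ} (hk : 1 ≤ k) :
    M.lcs (k + 1) = Submodule.map₂ M.mul ⊤ (M.lcs k) := by
  obtain ⟨k, rfl⟩ := Nat.exists_eq_add_of_le' hk
  rw [Submodule.map₂_eq_span_image2, lcs]
  congr
  ext z
  constructor
  · rintro ⟨x, y, hy, h⟩
    exact ⟨x, trivial, y, hy, h.symm⟩
  · rintro ⟨x, -, y, hy, h⟩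
    exact ⟨x, y, hy, h.symm⟩

namespace IsNaturalGrading

variable {M : ZinbielStr A} {t : ℕ} {Ag : ℕ → Submodule ℂ A}

theorem map₂_le (hg : M.IsNaturalGrading t Ag) (i j : ℕ) :
    Submodule.map₂ M.mul (Ag i) (Ag j) ≤ Ag (i + j) :=
  Submodule.map₂_le.2 fun x hx y hy => hg.mul_mem i j x y hx hy

theorem le_lcs (hg : M.IsNaturalGrading t Ag) {k : ℕ} (hk : 1 ≤ k) (hkt : k ≤ t) :
    Ag k ≤ M.lcs k := by
  rw [hg.lcs_eq k hk hkt]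
  exact le_iSup₂_of_le k le_rfl le_rfl

theorem disjoint_biSup_Ici (hg : M.IsNaturalGrading t Ag) (n : ℕ) :
    Disjoint (Ag n) (⨆ m ∈ Set.Ici (n + 1), Ag m) :=
  hg.indep.disjoint_biSup (by simp)

theorem lcs_add_one_le (hg : M.IsNaturalGrading t Ag) {j : ℕ} (hj : 1 ≤ j) (hjt : j ≤ t) :
    M.lcs (j + 1) ≤ Submodule.map₂ M.mul (Ag 1) (Ag j) ⊔ ⨆ m ∈ Set.Ici (j + 2), Ag m := by
  have htop : (⊤ : Submodule ℂ A) = ⨆ i, ⨆ (_ : 1 ≤ i), Ag i :=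
    hg.lcs_eq 1 le_rfl (hj.trans hjt)
  rw [M.lcs_add_one hj, htop, hg.lcs_eq j hj hjt]
  simp only [Submodule.map₂_iSup_left, Submodule.map₂_iSup_right]
  refine iSup₂_le fun k hk => iSup₂_le fun i hi => ?_
  by_cases hik : i = 1 ∧ k = j
  · obtain ⟨rfl, rfl⟩ := hik
    exact le_sup_left
  · exact le_sup_of_le_right <|
      (hg.map₂_le i k).trans (le_biSup Ag (show i + k ∈ Set.Ici (j + 2) by simp; omega))

end IsNaturalGrading

theorem span_one_mul_eq_succ {A : Type*} [AddCommGroup A] [Module ℂ A]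
    (M : ZinbielStr A) (s : ℕ)
    (Ag : ℕ → Submodule ℂ A) (hg : M.IsNaturalGrading (s - 1) Ag) :
    ∀ j : ℕ, 1 ≤ j →
      Submodule.span ℂ {z | ∃ x ∈ Ag 1, ∃ y ∈ Ag j, z = M.mul x y} = Ag (j + 1) := by
  intro j hj
  rw [span_mul_eq_map₂]
  have hle : Submodule.map₂ M.mul (Ag 1) (Ag j) ≤ Ag (j + 1) := add_comm 1 j ▸ hg.map₂_le 1 j
  rcases lt_or_ge (s - 1) (j + 1) with hjs | hjs
  · exact le_antisymm hle (hg.high_deg _ hjs ▸ bot_le)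
  · refine le_antisymm hle <|
      Disjoint.left_le_of_le_sup_right_of_le ?_ (hg.disjoint_biSup_Ici _) hle
    calc Ag (j + 1) ≤ M.lcs (j + 1) := hg.le_lcs (by omega) hjs
      _ ≤ _ := hg.lcs_add_one_le hj (by omega)

end ZinbielStr
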